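/- Let d ≥ 1 and let v ∈ ℂ^d satisfy |⟨f_j, v⟩|² = 1/d for all j = 0,…,d−1. Then the cyclic shifts of v are orthonormal: ⟨v^(k), v^(k')⟩ = δ_{kk'} for all k, k' ∈ {0,…,d−1}. -/

import Mathlib

open scoped ComplexInnerProductSpace

/-- `ω d = exp(2πi/d)`, a primitive `d`-th root of unity. -/
noncomputable def omegaRoot (d : ℕ) : ℂ := Complex.exp (2 * Real.pi * Complex.I / d)

/-- The `j`-th Fourier basis vector of `ℂ^d`, with components `ω_d^{jm}/√d`. -/
noncomputable def fourierVec (d : ℕ) (j : Fin d) : EuclideanSpace ℂ (Fin d) :=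
  WithLp.toLp 2 (fun m => omegaRoot d ^ ((j : ℕ) * (m : ℕ)) / (Real.sqrt d : ℂ))

/-- The cyclic shift `v^(k)` of `v`, with components `(v^(k))_{(m+k) mod d} = v_m`,
i.e. `(v^(k))_n = v_{(n-k) mod d}`. -/
def cyclicShift {d : ℕ} (k : Fin d) (v : EuclideanSpace ℂ (Fin d)) :
    EuclideanSpace ℂ (Fin d) :=
  WithLp.toLp 2 (fun n => v (n - k))

/-!
The Fourier vectors `f_j` form an orthonormal basis in which every cyclic shift is diagonal:
`⟪f_j, v^(k)⟫ = conj(ω^{jk}) ⟪f_j, v⟫`. Parseval then gives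
`⟪v^(k), v^(k')⟫ = ∑_j ω^{jk} conj(ω^{jk'}) |⟪f_j, v⟫|²`, and when every `|⟪f_j, v⟫|²`
equals `1/d` this sum is `⟪f_{k'}, f_k⟫ = δ_{kk'}`, by orthonormality of the Fourier vectors once more.
-/

open scoped ComplexConjugate

theorem geom_sum_eq_ite_of_pow_eq_one {K : Type*} [Field K] [DecidableEq K] {x : K} {n : ℕ}
    (hx : x ^ n = 1) :
    ∑ i ∈ Finset.range n, x ^ i = if x = 1 then (n : K) else 0 := by
  split_ifs with h
  · simp [h]
  · rw [geom_sum_eq h, hx, sub_self, zero_div]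

section

variable {d : ℕ}

theorem conj_fourierVec_mul_fourierVec (i j m : Fin d) :
    conj (fourierVec d i m) * fourierVec d j m =
      conj (omegaRoot d ^ ((i : ℕ) * m)) * omegaRoot d ^ ((j : ℕ) * m) / d := by
  have hsqrt : (Real.sqrt d : ℂ) * Real.sqrt d = d := by
    rw [← Complex.ofReal_mul, Real.mul_self_sqrt d.cast_nonneg, Complex.ofReal_natCast]
  simp only [fourierVec, map_div₀, Complex.conj_ofReal]
  rw [div_mul_div_comm, hsqrt]

variable [NeZero d]

theorem isPrimitiveRoot_omegaRoot : IsPrimitiveRoot (omegaRoot d) d :=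
  Complex.isPrimitiveRoot_exp d (NeZero.ne d)

theorem omegaRoot_pow_mul_val_add (j m k : Fin d) :
    omegaRoot d ^ ((j : ℕ) * (m + k : Fin d)) =
      omegaRoot d ^ ((j : ℕ) * k) * omegaRoot d ^ ((j : ℕ) * m) := by
  have hj : (omegaRoot d ^ (j : ℕ)) ^ d = 1 := by
    rw [← pow_mul, mul_comm, pow_mul, isPrimitiveRoot_omegaRoot.pow_eq_one, one_pow]
  simp only [pow_mul, Fin.val_add, ← pow_eq_pow_mod _ hj, pow_add, mul_comm]

theorem sum_conj_omegaRoot_pow_mul_omegaRoot_pow (i j : Fin d) :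
    ∑ m : Fin d, conj (omegaRoot d ^ ((i : ℕ) * m)) * omegaRoot d ^ ((j : ℕ) * m) =
      if i = j then (d : ℂ) else 0 := by
  have hω := isPrimitiveRoot_omegaRoot (d := d)
  set ζ := conj (omegaRoot d ^ (i : ℕ)) * omegaRoot d ^ (j : ℕ) with hζ
  have hterm (m : Fin d) :
      conj (omegaRoot d ^ ((i : ℕ) * m)) * omegaRoot d ^ ((j : ℕ) * m) = ζ ^ (m : ℕ) := by
    rw [mul_pow, pow_mul, pow_mul, map_pow]
  have hζ_pow : ζ ^ d = 1 := by
    rw [mul_pow, ← map_pow, pow_right_comm, pow_right_comm _ (j : ℕ), hω.pow_eq_one, one_pow,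
      one_pow, map_one, one_mul]
  have hζ_eq_one : ζ = 1 ↔ i = j := by
    rw [hζ, ← Complex.inv_eq_conj (by rw [norm_pow, hω.norm'_eq_one (NeZero.ne d), one_pow]),
      inv_mul_eq_one₀ (pow_ne_zero _ (hω.ne_zero (NeZero.ne d))), ← Fin.val_inj]
    exact ⟨fun h => hω.pow_inj i.isLt j.isLt h, fun h => by rw [h]⟩
  simp only [hterm, Fin.sum_univ_eq_sum_range (ζ ^ ·), geom_sum_eq_ite_of_pow_eq_one hζ_pow,
    hζ_eq_one]

theorem orthonormal_fourierVec : Orthonormal ℂ (fourierVec d) := by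
  rw [orthonormal_iff_ite]
  intro i j
  simp only [PiLp.inner_apply, RCLike.inner_apply', conj_fourierVec_mul_fourierVec,
    ← Finset.sum_div, sum_conj_omegaRoot_pow_mul_omegaRoot_pow]
  split_ifs
  · exact div_self (Nat.cast_ne_zero.mpr (NeZero.ne d))
  · exact zero_div _

noncomputable def fourierVecBasis : OrthonormalBasis (Fin d) ℂ (EuclideanSpace ℂ (Fin d)) :=
  OrthonormalBasis.mk orthonormal_fourierVec
    (orthonormal_fourierVec.linearIndependent.span_eq_top_of_card_eq_finrank
      (by rw [Fintype.card_fin, finrank_euclideanSpace_fin])).ge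

theorem coe_fourierVecBasis : ⇑(fourierVecBasis (d := d)) = fourierVec d :=
  OrthonormalBasis.coe_mk _ _

theorem fourierVec_apply_add (j m k : Fin d) :
    fourierVec d j (m + k) = omegaRoot d ^ ((j : ℕ) * k) * fourierVec d j m := by
  simp only [fourierVec, PiLp.toLp_apply, omegaRoot_pow_mul_val_add, mul_div_assoc]

theorem inner_fourierVec_cyclicShift (j k : Fin d) (v : EuclideanSpace ℂ (Fin d)) :
    ⟪fourierVec d j, cyclicShift k v⟫ =
      conj (omegaRoot d ^ ((j : ℕ) * k)) * ⟪fourierVec d j, v⟫ := by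
  simp only [PiLp.inner_apply, RCLike.inner_apply', Finset.mul_sum]
  rw [← Equiv.sum_comp (Equiv.addRight k)]
  refine Finset.sum_congr rfl fun m _ => ?_
  simp only [Equiv.coe_addRight, cyclicShift, PiLp.toLp_apply, add_sub_cancel_right,
    fourierVec_apply_add, map_mul]
  ring

theorem inner_cyclicShift_cyclicShift (k k' : Fin d) (u v : EuclideanSpace ℂ (Fin d)) :
    ⟪cyclicShift k u, cyclicShift k' v⟫ =
      ∑ j : Fin d, omegaRoot d ^ ((j : ℕ) * k) * conj (omegaRoot d ^ ((j : ℕ) * k')) *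
        (conj ⟪fourierVec d j, u⟫ * ⟪fourierVec d j, v⟫) := by
  rw [← fourierVecBasis.sum_inner_mul_inner]
  refine Finset.sum_congr rfl fun j _ => ?_
  rw [← inner_conj_symm (cyclicShift k u), coe_fourierVecBasis, inner_fourierVec_cyclicShift,
    inner_fourierVec_cyclicShift, map_mul, Complex.conj_conj]
  ring

end

theorem stmt_1_general (d : ℕ) (v : EuclideanSpace ℂ (Fin d))
    (hub : ∀ j : Fin d, ‖⟪fourierVec d j, v⟫‖ ^ 2 = 1 / d) :
    ∀ k k' : Fin d,
      ⟪cyclicShift k v, cyclicShift k' v⟫ = if k = k' then (1 : ℂ) else 0 := by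
  intro k k'
  have : NeZero d := ⟨k.pos.ne'⟩
  calc ⟪cyclicShift k v, cyclicShift k' v⟫
      = ∑ j : Fin d, conj (fourierVec d k' j) * fourierVec d k j := by
        rw [inner_cyclicShift_cyclicShift]
        refine Finset.sum_congr rfl fun j _ => ?_
        rw [Complex.conj_mul', ← Complex.ofReal_pow, hub, conj_fourierVec_mul_fourierVec,
          mul_comm (j : ℕ) k, mul_comm (j : ℕ) k']
        push_cast
        ring
    _ = ⟪fourierVec d k', fourierVec d k⟫ := by
        simp only [PiLp.inner_apply, RCLike.inner_apply']
    _ = if k = k' then 1 else 0 := by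
        rw [orthonormal_iff_ite.mp orthonormal_fourierVec]
        simp only [eq_comm]

theorem stmt_1 (d : ℕ) (hd : 1 ≤ d) (v : EuclideanSpace ℂ (Fin d))
    (hub : ∀ j : Fin d, ‖⟪fourierVec d j, v⟫‖ ^ 2 = 1 / d) :
    ∀ k k' : Fin d,
      ⟪cyclicShift k v, cyclicShift k' v⟫ = if k = k' then (1 : ℂ) else 0 :=
  stmt_1_general d v hub
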